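/- Let F be a field and let R be the subring of the product ∏_{n=1}^∞ M₂(F) consisting of all sequences (A_n) of 2×2 matrices over F for which there exist N ≥ 1 and a scalar α ∈ F such that for all n ≥ N the matrix A_n has the form [[α, β_n],[0, α]] for some β_n ∈ F. For each n ≥ 1 let I_n = {(A_k) ∈ R : A_k = 0 for all k ≥ n}. Then each I_n is a semiprime two-sided ideal of R (indeed R/I_n ≅ R), the I_n form an ascending chain, but the union ⋃_n I_n is not semiprime: for the constant sequence a with a_k = [[0,1],[0,0]] for all k, one has aRa ⊆ ⋃_n I_n while a ∉ ⋃_n I_n. -/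
import Mathlib


/-- The ring of sequences of `2×2` matrices over `F` which are eventually of the form
`[[α, βₙ],[0, α]]` for a single scalar `α`. -/
def KLRing (F : Type*) [Field F] : Subring (∀ _ : ℕ, Matrix (Fin 2) (Fin 2) F) where
  carrier := {A | ∃ N : ℕ, ∃ α : F, ∀ n, N ≤ n → A n 1 0 = 0 ∧ A n 0 0 = α ∧ A n 1 1 = α}
  zero_mem' := ⟨0, 0, fun n _ => by simp⟩
  one_mem' := ⟨0, 1, fun n _ => by simp [Matrix.one_apply]⟩
  add_mem' := by
    rintro A B ⟨N, α, hA⟩ ⟨M, β, hB⟩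
    exact ⟨max N M, α + β, fun n hn => by
      obtain ⟨h1, h2, h3⟩ := hA n (le_trans (le_max_left _ _) hn)
      obtain ⟨h4, h5, h6⟩ := hB n (le_trans (le_max_right _ _) hn)
      simp [h1, h2, h3, h4, h5, h6]⟩
  neg_mem' := by
    rintro A ⟨N, α, hA⟩
    exact ⟨N, -α, fun n hn => by
      obtain ⟨h1, h2, h3⟩ := hA n hn
      simp [h1, h2, h3]⟩
  mul_mem' := by
    rintro A B ⟨N, α, hA⟩ ⟨M, β, hB⟩
    refine ⟨max N M, α * β, fun n hn => ?_⟩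
    obtain ⟨h1, h2, h3⟩ := hA n (le_trans (le_max_left _ _) hn)
    obtain ⟨h4, h5, h6⟩ := hB n (le_trans (le_max_right _ _) hn)
    refine ⟨?_, ?_, ?_⟩ <;>
      simp [Matrix.mul_apply, Fin.sum_univ_two, h1, h2, h3, h4, h5, h6]

/-- The ideal `Iₙ` of sequences vanishing from the `n`-th place onward. -/
def KLIdeal (F : Type*) [Field F] (n : ℕ) : TwoSidedIdeal (KLRing F) :=
  TwoSidedIdeal.mk' {a | ∀ k, n ≤ k → (a : ∀ _ : ℕ, Matrix (Fin 2) (Fin 2) F) k = 0}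
    (fun k _ => rfl)
    (fun ha hb k hk => by simp [ha k hk, hb k hk])
    (fun ha k hk => by simp [ha k hk])
    (fun {x y} hb k hk => by
      show (x : ∀ _ : ℕ, Matrix (Fin 2) (Fin 2) F) k *
        (y : ∀ _ : ℕ, Matrix (Fin 2) (Fin 2) F) k = 0
      rw [hb k hk, mul_zero])
    (fun {x y} ha k hk => by
      show (x : ∀ _ : ℕ, Matrix (Fin 2) (Fin 2) F) k *
        (y : ∀ _ : ℕ, Matrix (Fin 2) (Fin 2) F) k = 0
      rw [ha k hk, zero_mul])

/-- The constant sequence `[[0,1],[0,0]]`, an element of `KLRing F`. -/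
def KLa (F : Type*) [Field F] : KLRing F :=
  ⟨fun _ => Matrix.of ![![0, 1], ![0, 0]], ⟨0, 0, fun n _ => by simp⟩⟩

/-- A two-sided ideal `P` of a ring `R` is semiprime if `aRa ⊆ P` implies `a ∈ P`. -/
def IsSemiprimeTSI {R : Type*} [Ring R] (P : TwoSidedIdeal R) : Prop :=
  ∀ a : R, (∀ r : R, a * r * a ∈ P) → a ∈ P


lemma mem_KLIdeal {F : Type*} [Field F] {n : ℕ} {a : KLRing F} :
    a ∈ KLIdeal F n ↔ ∀ k, n ≤ k → (a : ∀ _ : ℕ, Matrix (Fin 2) (Fin 2) F) k = 0 := by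
  simp [KLIdeal, TwoSidedIdeal.mem_mk']


/-- The shift-by-`n` endomorphism of `KLRing F`. -/
def KLshift (F : Type*) [Field F] (n : ℕ) : KLRing F →+* KLRing F where
  toFun a := ⟨fun k => (a : ∀ _ : ℕ, Matrix (Fin 2) (Fin 2) F) (k + n), by
    obtain ⟨N, α, h⟩ := a.2
    exact ⟨N, α, fun k hk => h (k + n) (le_trans hk (Nat.le_add_right _ _))⟩⟩
  map_one' := rfl
  map_mul' _ _ := rfl
  map_zero' := rfl
  map_add' _ _ := rfl

/-- In the Kaplansky–Lanski ring, the ideals `Iₙ` are semiprime (indeed `R/Iₙ ≅ R`) and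
form an ascending chain, but their union is not semiprime: for the constant sequence
`a = [[0,1],[0,0]]`, `aRa ⊆ ⋃ₙ Iₙ` while `a ∉ ⋃ₙ Iₙ`. -/
theorem stmt_13 (F : Type*) [Field F] :
    (∀ n, IsSemiprimeTSI (KLIdeal F n)) ∧
    (∀ n, ∃ φ : KLRing F →+* KLRing F, Function.Surjective φ ∧
      ∀ a : KLRing F, φ a = 0 ↔ a ∈ KLIdeal F n) ∧
    Monotone (KLIdeal F) ∧
    (∀ r : KLRing F, KLa F * r * KLa F ∈ ⋃ n, (KLIdeal F n : Set (KLRing F))) ∧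
    KLa F ∉ ⋃ n, (KLIdeal F n : Set (KLRing F)) := by

  refine ⟨?_, ?_, ?_, ?_, ?_⟩
  · -- semiprime
    intro n a ha
    rw [mem_KLIdeal]
    intro k hk
    ext x y
    have h := (mem_KLIdeal.mp (ha ⟨fun j => if j = k then Matrix.single y x (1 : F)
      else 0, ⟨k + 1, 0, fun j hj => by
        have : j ≠ k := by omega
        simp [this]⟩⟩)) k hk
    have h3 : ((a : ∀ _ : ℕ, Matrix (Fin 2) (Fin 2) F) k * Matrix.single y x (1 : F) *
        (a : ∀ _ : ℕ, Matrix (Fin 2) (Fin 2) F) k) x y = 0 := by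
      have h2 := congrFun (congrFun h x) y
      simpa using h2
    simp [Matrix.mul_apply, Fin.sum_univ_two, Matrix.single] at h3
    fin_cases x <;> fin_cases y <;>
      simpa [mul_self_eq_zero, Matrix.zero_apply] using h3
  · -- quotient iso via shift
    intro n
    refine ⟨KLshift F n, ?_, ?_⟩
    · intro b
      refine ⟨⟨fun k => if n ≤ k then (b : ∀ _ : ℕ, Matrix (Fin 2) (Fin 2) F) (k - n) else 0,
        ?_⟩, ?_⟩
      · obtain ⟨N, α, h⟩ := b.2
        refine ⟨N + n, α, fun k hk => ?_⟩
        have h1 : n ≤ k := by omega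
        have h2 : N ≤ k - n := by omega
        simpa [h1] using h (k - n) h2
      · apply Subtype.ext
        funext k
        show (if n ≤ k + n then (b : ∀ _ : ℕ, Matrix (Fin 2) (Fin 2) F) (k + n - n) else 0) = _
        rw [if_pos (Nat.le_add_left _ _), Nat.add_sub_cancel]
    · intro a
      rw [mem_KLIdeal]
      constructor
      · intro h k hk
        have h2 : (a : ∀ _ : ℕ, Matrix (Fin 2) (Fin 2) F) (k - n + n) = 0 :=
          congrFun (congrArg Subtype.val h) (k - n)
        rwa [Nat.sub_add_cancel hk] at h2
      · intro h
        apply Subtype.ext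
        funext k
        exact h (k + n) (Nat.le_add_left _ _)
  · -- monotone
    intro m n hmn a ha
    rw [mem_KLIdeal] at ha ⊢
    exact fun k hk => ha k (le_trans hmn hk)
  · -- aRa in union
    intro r
    obtain ⟨N, α, h⟩ := r.2
    rw [Set.mem_iUnion]
    refine ⟨N, ?_⟩
    rw [SetLike.mem_coe, mem_KLIdeal]
    intro k hk
    have h10 := (h k hk).1
    have : ((KLa F * r * KLa F : KLRing F) : ∀ _ : ℕ, Matrix (Fin 2) (Fin 2) F) k =
        (fun _ => Matrix.of ![![0, 1], ![0, 0]] : ∀ _ : ℕ, Matrix (Fin 2) (Fin 2) F) k *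
        (r : ∀ _ : ℕ, Matrix (Fin 2) (Fin 2) F) k *
        (fun _ => Matrix.of ![![0, 1], ![0, 0]] : ∀ _ : ℕ, Matrix (Fin 2) (Fin 2) F) k := rfl
    rw [this]
    ext x y
    fin_cases x <;> fin_cases y <;>
      simp [Matrix.mul_apply, Matrix.vecMul, dotProduct, Fin.sum_univ_two, h10]
  · -- a not in union
    rw [Set.mem_iUnion]
    rintro ⟨n, hn⟩
    rw [SetLike.mem_coe, mem_KLIdeal] at hn
    have := congrFun (congrFun (hn n le_rfl) 0) 1
    simp [KLa] at this
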